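/- Under the stated hypotheses, the family (P_k)_{k∈ℤ} defined by P_k := (Σ_{j=1}^{n} (ik)^{j})·N_k is M-bounded: sup_{k∈ℤ} ‖P_k‖ < ∞ and sup_{k∈ℤ} ‖k·(P_{k+1} − P_k)‖ < ∞. -/
import Mathlib


open Finset

/-- A family `(M_k)_{k∈ℤ}` of bounded operators is M-bounded if
`sup_k ‖M_k‖ < ∞` and `sup_k ‖k·(M_{k+1} − M_k)‖ < ∞`. -/
def MBounded {X : Type*} [NormedAddCommGroup X] [NormedSpace ℂ X]
    (M : ℤ → X →L[ℂ] X) : Prop :=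
  (∃ C : ℝ, ∀ k : ℤ, ‖M k‖ ≤ C) ∧ (∃ C : ℝ, ∀ k : ℤ, ‖(k : ℂ) • (M (k + 1) - M k)‖ ≤ C)

/-- The operator `D_k := (Σ_{j=1}^{n} (ik)^{j})·I − A − L_k`. -/
noncomputable def Dop {X : Type*} [NormedAddCommGroup X] [NormedSpace ℂ X]
    (n : ℕ) (A : X →L[ℂ] X) (L : ℤ → X →L[ℂ] X) (k : ℤ) : X →L[ℂ] X :=
  (∑ j ∈ Finset.Icc 1 n, (Complex.I * (k : ℂ)) ^ (j : ℕ)) • (1 : X →L[ℂ] X) - A - L k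

/-- Norm bound for a difference of powers. -/
lemma aux_pow_sub_pow_norm_le (x y : ℂ) (r : ℝ) (hx : ‖x‖ ≤ r) (hy : ‖y‖ ≤ r) (j : ℕ) :
    ‖x ^ j - y ^ j‖ ≤ j * r ^ (j - 1) * ‖x - y‖ := by
  have hr : 0 ≤ r := le_trans (norm_nonneg x) hx
  rw [← geom_sum₂_mul, norm_mul]
  have hsum : ‖∑ i ∈ range j, x ^ i * y ^ (j - 1 - i)‖ ≤ j * r ^ (j - 1) := by
    calc ‖∑ i ∈ range j, x ^ i * y ^ (j - 1 - i)‖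
        ≤ ∑ i ∈ range j, ‖x ^ i * y ^ (j - 1 - i)‖ := norm_sum_le _ _
      _ ≤ ∑ _i ∈ range j, r ^ (j - 1) := by
          refine sum_le_sum fun i hi => ?_
          rw [norm_mul, norm_pow, norm_pow]
          calc ‖x‖ ^ i * ‖y‖ ^ (j - 1 - i)
              ≤ r ^ i * r ^ (j - 1 - i) :=
                mul_le_mul (pow_le_pow_left₀ (norm_nonneg _) hx i)
                  (pow_le_pow_left₀ (norm_nonneg _) hy _) (by positivity) (by positivity)
            _ = r ^ (j - 1) := by
                rw [← pow_add]; congr 1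
                have := mem_range.mp hi; omega
      _ = j * r ^ (j - 1) := by rw [sum_const, card_range, nsmul_eq_mul]
  exact mul_le_mul_of_nonneg_right hsum (norm_nonneg _)

/-- The key scalar estimate. -/
lemma aux_key_scalar (n : ℕ) (hn : 1 ≤ n) (z : ℂ) (hz : 1 ≤ ‖z‖) :
    ‖z * ((∑ j ∈ Finset.Icc 1 n, (Complex.I * (z + 1)) ^ (j : ℕ)) -
        ∑ j ∈ Finset.Icc 1 n, (Complex.I * z) ^ (j : ℕ))‖
      ≤ (n ^ 2 * 2 ^ (n - 1)) * ‖z‖ ^ n := by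
  set b := ‖z‖ with hb
  have hb0 : (0:ℝ) < b := lt_of_lt_of_le one_pos hz
  have hb1 : b + 1 ≤ 2 * b := by linarith
  have hIz : ‖Complex.I * z‖ ≤ b + 1 := by
    rw [norm_mul, Complex.norm_I, one_mul]; linarith
  have hIz1 : ‖Complex.I * (z + 1)‖ ≤ b + 1 := by
    rw [norm_mul, Complex.norm_I, one_mul]
    calc ‖z + 1‖ ≤ ‖z‖ + ‖(1:ℂ)‖ := norm_add_le _ _
      _ = b + 1 := by rw [norm_one]
  have hterm : ∀ j ∈ Finset.Icc 1 n,
      ‖(Complex.I * (z + 1)) ^ (j:ℕ) - (Complex.I * z) ^ (j:ℕ)‖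
        ≤ n * (2 ^ (n-1) * b ^ (n-1)) := by
    intro j hj
    obtain ⟨hj1, hjn⟩ := mem_Icc.mp hj
    have h1 : ‖(Complex.I * (z + 1)) ^ (j:ℕ) - (Complex.I * z) ^ (j:ℕ)‖
        ≤ j * (b + 1) ^ (j - 1) * ‖Complex.I * (z + 1) - Complex.I * z‖ :=
      aux_pow_sub_pow_norm_le _ _ _ hIz1 hIz j
    have hdiff : Complex.I * (z + 1) - Complex.I * z = Complex.I := by ring
    rw [hdiff, Complex.norm_I, mul_one] at h1
    have h2 : (b + 1) ^ (j - 1) ≤ (2 * b) ^ (n - 1) := by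
      calc (b + 1) ^ (j - 1) ≤ (2 * b) ^ (j - 1) :=
            pow_le_pow_left₀ (by linarith) hb1 _
        _ ≤ (2 * b) ^ (n - 1) := pow_le_pow_right₀ (by linarith) (by omega)
    calc ‖(Complex.I * (z + 1)) ^ (j:ℕ) - (Complex.I * z) ^ (j:ℕ)‖
        ≤ j * (b + 1) ^ (j - 1) := h1
      _ ≤ n * (2 * b) ^ (n - 1) := by
          apply mul_le_mul _ h2 (by positivity) (by positivity)
          exact_mod_cast hjn
      _ = n * (2 ^ (n-1) * b ^ (n-1)) := by rw [mul_pow]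
  have hsum : ‖(∑ j ∈ Finset.Icc 1 n, (Complex.I * (z + 1)) ^ (j:ℕ)) -
      ∑ j ∈ Finset.Icc 1 n, (Complex.I * z) ^ (j:ℕ)‖
        ≤ n * (n * (2 ^ (n-1) * b ^ (n-1))) := by
    rw [← Finset.sum_sub_distrib]
    calc ‖∑ j ∈ Finset.Icc 1 n, ((Complex.I * (z + 1)) ^ (j:ℕ) - (Complex.I * z) ^ (j:ℕ))‖
        ≤ ∑ j ∈ Finset.Icc 1 n, ‖(Complex.I * (z + 1)) ^ (j:ℕ) - (Complex.I * z) ^ (j:ℕ)‖ :=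
          norm_sum_le _ _
      _ ≤ ∑ _j ∈ Finset.Icc 1 n, (n * (2 ^ (n-1) * b ^ (n-1)) : ℝ) := sum_le_sum hterm
      _ = n * (n * (2 ^ (n-1) * b ^ (n-1))) := by
          rw [sum_const, Nat.card_Icc, nsmul_eq_mul]; norm_num
  rw [norm_mul]
  have hpow : b ^ (n - 1) * b = b ^ n := by
    rw [← pow_succ]; congr 1; omega
  calc b * ‖_‖ ≤ b * (n * (n * (2 ^ (n-1) * b ^ (n-1)))) :=
        mul_le_mul_of_nonneg_left hsum (le_of_lt hb0)
    _ = (n^2 * 2^(n-1)) * (b ^ (n-1) * b) := by ring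
    _ = (n^2 * 2^(n-1)) * b ^ n := by rw [hpow]

/-- the family `P_k := (Σ_{j=1}^{n} (ik)^{j})·N_k` is M-bounded. -/
theorem P_MBounded {X : Type*} [NormedAddCommGroup X] [NormedSpace ℂ X] [CompleteSpace X]
    (n : ℕ) (hn : 1 ≤ n) (A : X →L[ℂ] X) (L N : ℤ → X →L[ℂ] X)
    (hL : ∃ C : ℝ, ∀ k : ℤ, ‖L k‖ ≤ C)
    (hLdiff : ∃ C : ℝ, ∀ k : ℤ, ‖(k : ℂ) • (L (k + 1) - L k)‖ ≤ C)
    (hN : ∀ k : ℤ, N k * Dop n A L k = 1 ∧ Dop n A L k * N k = 1)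
    (hNbdd : ∃ C : ℝ, ∀ k : ℤ, ‖N k‖ ≤ C)
    (hSbdd : ∃ C : ℝ, ∀ k : ℤ, ‖((Complex.I * (k : ℂ)) ^ (n : ℕ)) • N k‖ ≤ C) :
    MBounded (fun k => (∑ j ∈ Finset.Icc 1 n, (Complex.I * (k : ℂ)) ^ (j : ℕ)) • N k) := by
  obtain ⟨CL, hCL⟩ := hL
  obtain ⟨CD, hCD⟩ := hLdiff
  obtain ⟨CN, hCN⟩ := hNbdd
  obtain ⟨CS, hCS⟩ := hSbdd
  have hCL0 : 0 ≤ CL := le_trans (norm_nonneg _) (hCL 0)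
  have hCD0 : 0 ≤ CD := le_trans (norm_nonneg _) (hCD 0)
  have hCN0 : 0 ≤ CN := le_trans (norm_nonneg _) (hCN 0)
  have hCS0 : 0 ≤ CS := le_trans (norm_nonneg _) (hCS 0)
  set σ : ℤ → ℂ := fun k => ∑ j ∈ Finset.Icc 1 n, (Complex.I * (k : ℂ)) ^ (j : ℕ) with hσ
  -- Key identity: σ k • N k = 1 + A * N k + L k * N k
  have hPid : ∀ k : ℤ, σ k • N k = 1 + A * N k + L k * N k := by
    intro k
    have h1 : (σ k) • (1 : X →L[ℂ] X) = Dop n A L k + A + L k := by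
      rw [Dop]; abel
    calc σ k • N k = ((σ k) • (1 : X →L[ℂ] X)) * N k := by
          rw [smul_mul_assoc, one_mul]
      _ = (Dop n A L k + A + L k) * N k := by rw [h1]
      _ = Dop n A L k * N k + A * N k + L k * N k := by
          rw [add_mul, add_mul]
      _ = 1 + A * N k + L k * N k := by rw [(hN k).2]
  constructor
  · -- boundedness of P
    refine ⟨1 + ‖A‖ * CN + CL * CN, fun k => ?_⟩
    simp only
    rw [hPid k]
    calc ‖(1 : X →L[ℂ] X) + A * N k + L k * N k‖
        ≤ ‖(1 : X →L[ℂ] X)‖ + ‖A * N k‖ + ‖L k * N k‖ := norm_add₃_le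
      _ ≤ 1 + ‖A‖ * CN + CL * CN := by
          have h1 : ‖A * N k‖ ≤ ‖A‖ * CN :=
            le_trans (norm_mul_le _ _) (mul_le_mul_of_nonneg_left (hCN k) (norm_nonneg _))
          have h2 : ‖L k * N k‖ ≤ CL * CN :=
            le_trans (norm_mul_le _ _)
              (mul_le_mul (hCL k) (hCN k) (norm_nonneg _) hCL0)
          have h3 : ‖(1 : X →L[ℂ] X)‖ ≤ 1 := ContinuousLinearMap.norm_id_le
          linarith
  · -- boundedness of k(P_{k+1} - P_k)
    refine ⟨(‖A‖ + CL) * ((n^2 * 2^(n-1)) * (CN * CS) + CN * (CD * CN)) + CD * CN,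
      fun k => ?_⟩
    simp only
    set E : X →L[ℂ] X := A + L (k + 1) with hE
    set ΔL : X →L[ℂ] X := L (k + 1) - L k with hΔL
    set c : ℂ := (k : ℂ) * (σ k - σ (k + 1)) with hc
    -- difference of resolvents
    have hNdiff : N (k + 1) - N k
        = (σ k - σ (k + 1)) • (N (k + 1) * N k) + N (k + 1) * ΔL * N k := by
      have hDd : Dop n A L k - Dop n A L (k + 1)
          = (σ k - σ (k + 1)) • (1 : X →L[ℂ] X) + ΔL := by
        rw [Dop, Dop, sub_smul, hΔL]; abel
      have h2 : N (k + 1) * (Dop n A L k - Dop n A L (k + 1)) * N k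
          = N (k + 1) - N k := by
        rw [mul_sub, sub_mul, mul_assoc, (hN k).2, mul_one, (hN (k+1)).1, one_mul]
      rw [← h2, hDd]
      simp only [mul_add, add_mul, mul_smul_comm, smul_mul_assoc, mul_one]
    -- main identity
    have hmain : (k : ℂ) • ((σ (k+1)) • N (k+1) - (σ k) • N k)
        = E * (c • (N (k+1) * N k) + N (k+1) * ((k:ℂ) • ΔL) * N k)
          + ((k:ℂ) • ΔL) * N k := by
      have hP1 : (σ (k+1)) • N (k+1) - (σ k) • N k
          = E * (N (k+1) - N k) + ΔL * N k := by
        rw [hPid, hPid, hE, hΔL]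
        rw [mul_sub, add_mul, add_mul, sub_mul]
        abel
      rw [hP1, hNdiff]
      rw [hc]
      simp only [smul_add, mul_add, mul_smul_comm, smul_mul_assoc, smul_smul]
    -- bound the singular term
    have hB1 : ‖c • (N (k+1) * N k)‖ ≤ (n^2 * 2^(n-1)) * (CN * CS) := by
      rcases eq_or_ne k 0 with rfl | hk
      · have hc0 : c = 0 := by rw [hc]; push_cast; ring
        rw [hc0, zero_smul, norm_zero]
        exact mul_nonneg (by positivity) (mul_nonneg hCN0 hCS0)
      · have hk1 : (1:ℝ) ≤ ‖(k:ℂ)‖ := by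
          rw [show ((k:ℂ)) = ((k:ℤ):ℂ) from rfl, Complex.norm_intCast]
          exact_mod_cast Int.one_le_abs hk
        have hkC : (k : ℂ) ≠ 0 := Int.cast_ne_zero.mpr hk
        have hIk : (Complex.I * (k:ℂ)) ^ n ≠ 0 :=
          pow_ne_zero _ (mul_ne_zero Complex.I_ne_zero hkC)
        have hrw : c • (N (k+1) * N k)
            = (c / (Complex.I * (k:ℂ)) ^ n) •
              (N (k+1) * (((Complex.I * (k:ℂ)) ^ n) • N k)) := by
          rw [mul_smul_comm, smul_smul, div_mul_cancel₀ _ hIk]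
        have hcnorm : ‖c‖ ≤ (n^2 * 2^(n-1)) * ‖(k:ℂ)‖ ^ n := by
          have := aux_key_scalar n hn (k:ℂ) hk1
          rw [hc]
          rw [show σ k - σ (k+1) = -(σ (k+1) - σ k) by ring, mul_neg, norm_neg]
          simpa only [hσ, Int.cast_add, Int.cast_one] using this
        have hdenom : ‖(Complex.I * (k:ℂ)) ^ n‖ = ‖(k:ℂ)‖ ^ n := by
          rw [norm_pow, norm_mul, Complex.norm_I, one_mul]
        have hNS : ‖N (k+1) * (((Complex.I * (k:ℂ)) ^ n) • N k)‖ ≤ CN * CS :=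
          le_trans (norm_mul_le _ _)
            (mul_le_mul (hCN _) (hCS _) (norm_nonneg _) hCN0)
        have hkpow : (0:ℝ) < ‖(k:ℂ)‖ ^ n := by positivity
        have hfrac : ‖c‖ / ‖(k:ℂ)‖ ^ n ≤ (n^2 * 2^(n-1)) := by
          rw [div_le_iff₀ hkpow]; exact hcnorm
        have hstep : ‖(c / (Complex.I * (k:ℂ)) ^ n) •
              (N (k+1) * (((Complex.I * (k:ℂ)) ^ n) • N k))‖
            ≤ ‖c / (Complex.I * (k:ℂ)) ^ n‖ *
              ‖N (k+1) * (((Complex.I * (k:ℂ)) ^ n) • N k)‖ :=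
          ContinuousLinearMap.opNorm_smul_le _ _
        have hnd : ‖c / (Complex.I * (k:ℂ)) ^ n‖ = ‖c‖ / ‖(k:ℂ)‖ ^ n := by
          rw [norm_div, hdenom]
        rw [hrw]
        refine le_trans hstep ?_
        rw [hnd]
        exact mul_le_mul hfrac hNS (norm_nonneg _) (by positivity)
    -- bound the middle term
    have hB2 : ‖N (k+1) * ((k:ℂ) • ΔL) * N k‖ ≤ CN * (CD * CN) := by
      have e1 : ‖N (k+1) * ((k:ℂ) • ΔL) * N k‖ ≤ ‖N (k+1)‖ * ‖((k:ℂ) • ΔL) * N k‖ := by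
        rw [mul_assoc]; exact norm_mul_le _ _
      have e2 : ‖((k:ℂ) • ΔL) * N k‖ ≤ CD * CN :=
        le_trans (norm_mul_le _ _) (mul_le_mul (hCD k) (hCN k) (norm_nonneg _) hCD0)
      refine le_trans e1 ?_
      exact mul_le_mul (hCN _) e2 (norm_nonneg _) hCN0
    have hB3 : ‖((k:ℂ) • ΔL) * N k‖ ≤ CD * CN :=
      le_trans (norm_mul_le _ _) (mul_le_mul (hCD k) (hCN k) (norm_nonneg _) hCD0)
    have hEn : ‖E‖ ≤ ‖A‖ + CL := le_trans (norm_add_le _ _) (by linarith [hCL (k+1)])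
    rw [hmain]
    have h4 : ‖c • (N (k+1) * N k) + N (k+1) * ((k:ℂ) • ΔL) * N k‖
        ≤ (n^2 * 2^(n-1)) * (CN * CS) + CN * (CD * CN) :=
      le_trans (norm_add_le _ _) (add_le_add hB1 hB2)
    have h5 : ‖E * (c • (N (k+1) * N k) + N (k+1) * ((k:ℂ) • ΔL) * N k)‖
        ≤ (‖A‖ + CL) * ((n^2 * 2^(n-1)) * (CN * CS) + CN * (CD * CN)) :=
      le_trans (norm_mul_le _ _) (mul_le_mul hEn h4 (norm_nonneg _) (by positivity))
    have h6 := norm_add_le (E * (c • (N (k+1) * N k) + N (k+1) * ((k:ℂ) • ΔL) * N k))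
      (((k:ℂ) • ΔL) * N k)
    linarith
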